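/- Let V be a 2m-dimensional rational vector space, m ≥ 3, with basis dx_1,...,dx_m,dy_1,...,dy_m, and suppose W ⊆ Λ²V is a subspace containing w = Σ_{j=1}^m dx_j∧dy_j and all elements dx_j∧dx_l − dy_j∧dy_l and dx_j∧dy_l − dx_l∧dy_j for j < l, and closed under the operation of replacing w by w + (dx_k∧dy_l − dx_l∧dy_k) and applying the same two families of relations in the new basis (dx'_j = dx_j, dy'_k = dy_k + dy_l, dy'_l = dy_l − dy_k, dy'_j = dy_j otherwise). Then W contains dx_j∧dy_k for all j ≠ k and dy_j∧dy_k for all j ≠ k. -/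

import Mathlib

open ExteriorAlgebra

/-!
Both relation families are antisymmetric in their two indices, so they hold for all `p ≠ q`,
not only for `p < q`. Given `j ≠ k`, pick a third index `c` and shear with `dy'_c = dy_c + dy_k`,
which leaves `dy_j` unchanged. Each relation at `(j, c)` in the new basis then differs from the
same relation in the old basis by exactly `dx_j ∧ dy_k`, respectively `dy_j ∧ dy_k`.
-/

theorem Submodule.mem_of_ne_of_forall_lt_mem {R A α : Type*} [Ring R] [AddCommGroup A]
    [Module R A] [LinearOrder α] (W : Submodule R A) {r : α → α → A}
    (hr : ∀ p q, r q p = -r p q) (h : ∀ p q, p < q → r p q ∈ W) {p q : α} (hpq : p ≠ q) :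
    r p q ∈ W := by
  rcases hpq.lt_or_gt with hlt | hgt
  · exact h p q hlt
  · simpa [hr q p] using W.neg_mem (h q p hgt)

namespace ExteriorAlgebra

variable {R M α : Type*} [CommRing R] [AddCommGroup M] [Module R M] [LinearOrder α]

theorem ι_mul_ι_eq_neg (x y : M) : ι R x * ι R y = -(ι R y * ι R x) :=
  eq_neg_of_add_eq_zero_left (ι_add_mul_swap x y)

variable (W : Submodule R (ExteriorAlgebra R M)) (x y : α → M)

theorem ι_mul_ι_sub_ι_mul_ι_mem_of_ne
    (h : ∀ p q, p < q → ι R (x p) * ι R (x q) - ι R (y p) * ι R (y q) ∈ W)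
    {p q : α} (hpq : p ≠ q) : ι R (x p) * ι R (x q) - ι R (y p) * ι R (y q) ∈ W :=
  W.mem_of_ne_of_forall_lt_mem (fun p q => by
    rw [ι_mul_ι_eq_neg (x q), ι_mul_ι_eq_neg (y q)]; abel) h hpq

theorem ι_mul_ι_sub_ι_mul_ι_cross_mem_of_ne
    (h : ∀ p q, p < q → ι R (x p) * ι R (y q) - ι R (x q) * ι R (y p) ∈ W)
    {p q : α} (hpq : p ≠ q) : ι R (x p) * ι R (y q) - ι R (x q) * ι R (y p) ∈ W :=
  W.mem_of_ne_of_forall_lt_mem (fun _ _ => (neg_sub _ _).symm) h hpq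

end ExteriorAlgebra

theorem stmt18_general {V : Type*} [AddCommGroup V] [Module ℚ V] (m : ℕ) (hm : 3 ≤ m)
    (dx dy : Fin m → V)
    (dy' : Fin m → Fin m → Fin m → V)
    (hdy' : ∀ k l j, dy' k l j =
      if j = k then dy k + dy l else if j = l then dy l - dy k else dy j)
    (W : Submodule ℚ (ExteriorAlgebra ℚ V))
    (h1 : ∀ j l : Fin m, j < l →
      ι ℚ (dx j) * ι ℚ (dx l) - ι ℚ (dy j) * ι ℚ (dy l) ∈ W)
    (h2 : ∀ j l : Fin m, j < l →
      ι ℚ (dx j) * ι ℚ (dy l) - ι ℚ (dx l) * ι ℚ (dy j) ∈ W)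
    (h1' : ∀ k l : Fin m, k ≠ l → ∀ p q : Fin m, p < q →
      ι ℚ (dx p) * ι ℚ (dx q) - ι ℚ (dy' k l p) * ι ℚ (dy' k l q) ∈ W)
    (h2' : ∀ k l : Fin m, k ≠ l → ∀ p q : Fin m, p < q →
      ι ℚ (dx p) * ι ℚ (dy' k l q) - ι ℚ (dx q) * ι ℚ (dy' k l p) ∈ W) :
    ∀ j k : Fin m, j ≠ k →
      ι ℚ (dx j) * ι ℚ (dy k) ∈ W ∧ ι ℚ (dy j) * ι ℚ (dy k) ∈ W := by
  intro j k hjk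
  obtain ⟨c, hcj, hck⟩ := Fin.exists_ne_and_ne_of_two_lt j k (by omega)
  have hdy'c : dy' c k c = dy c + dy k := by simp [hdy']
  have hdy'j : dy' c k j = dy j := by simp [hdy', hcj.symm, hjk]
  have h1jc := ι_mul_ι_sub_ι_mul_ι_mem_of_ne W dx dy h1 hcj.symm
  have h2jc := ι_mul_ι_sub_ι_mul_ι_cross_mem_of_ne W dx dy h2 hcj.symm
  have h1'jc := ι_mul_ι_sub_ι_mul_ι_mem_of_ne W dx (dy' c k) (h1' c k hck) hcj.symm
  have h2'jc := ι_mul_ι_sub_ι_mul_ι_cross_mem_of_ne W dx (dy' c k) (h2' c k hck) hcj.symm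
  rw [hdy'c, hdy'j, map_add] at h1'jc h2'jc
  constructor
  · convert W.sub_mem h2'jc h2jc using 1
    noncomm_ring
  · convert W.sub_mem h1jc h1'jc using 1
    noncomm_ring

/-- steps (***) and (****) of Campana's proof. `W ⊆ Λ²V` contains
`w = Σ_j dx_j∧dy_j`, the relations `dx_j∧dx_l − dy_j∧dy_l` and `dx_j∧dy_l − dx_l∧dy_j`
(`j < l`), and is closed under passing to the modified bases `dy'` (for each `k ≠ l`:
`dy'_k = dy_k + dy_l`, `dy'_l = dy_l − dy_k`, `dy'_j = dy_j` otherwise, `dx'_j = dx_j`),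
i.e. contains the same two families of relations in each such new basis. Then `W`
contains `dx_j∧dy_k` and `dy_j∧dy_k` for all `j ≠ k`. -/
theorem stmt18 {V : Type*} [AddCommGroup V] [Module ℚ V] (m : ℕ) (hm : 3 ≤ m)
    (b : Module.Basis (Fin m ⊕ Fin m) ℚ V) (dx dy : Fin m → V)
    (hdx : ∀ j, dx j = b (Sum.inl j)) (hdy : ∀ j, dy j = b (Sum.inr j))
    (dy' : Fin m → Fin m → Fin m → V)
    (hdy' : ∀ k l j, dy' k l j =
      if j = k then dy k + dy l else if j = l then dy l - dy k else dy j)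
    (W : Submodule ℚ (ExteriorAlgebra ℚ V)) (hW : W ≤ ⋀[ℚ]^2 V)
    (hw : (∑ j : Fin m, ι ℚ (dx j) * ι ℚ (dy j)) ∈ W)
    (h1 : ∀ j l : Fin m, j < l →
      ι ℚ (dx j) * ι ℚ (dx l) - ι ℚ (dy j) * ι ℚ (dy l) ∈ W)
    (h2 : ∀ j l : Fin m, j < l →
      ι ℚ (dx j) * ι ℚ (dy l) - ι ℚ (dx l) * ι ℚ (dy j) ∈ W)
    (hw' : ∀ k l : Fin m, k ≠ l →
      (∑ j : Fin m, ι ℚ (dx j) * ι ℚ (dy' k l j)) ∈ W)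
    (h1' : ∀ k l : Fin m, k ≠ l → ∀ p q : Fin m, p < q →
      ι ℚ (dx p) * ι ℚ (dx q) - ι ℚ (dy' k l p) * ι ℚ (dy' k l q) ∈ W)
    (h2' : ∀ k l : Fin m, k ≠ l → ∀ p q : Fin m, p < q →
      ι ℚ (dx p) * ι ℚ (dy' k l q) - ι ℚ (dx q) * ι ℚ (dy' k l p) ∈ W) :
    ∀ j k : Fin m, j ≠ k →
      ι ℚ (dx j) * ι ℚ (dy k) ∈ W ∧ ι ℚ (dy j) * ι ℚ (dy k) ∈ W :=
  stmt18_general m hm dx dy dy' hdy' W h1 h2 h1' h2'
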